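/- arXiv:2110.08425 — 7 statements merged into one kernel-verified Lean document; each statement's English description precedes it below -/
import Mathlib

section
/- Let x, y, z be real sequences on {1,...,n}, each with population mean zero. Under complete randomization of n_A units into treatment group A, E[x̄_A ȳ_A z̄_A] = N_AAA · (1/n) ∑_{i=1}^n x_i y_i z_i, where N_AAA = (n/n_A³)·( n_A/n − 3n_A(n_A−1)/(n(n−1)) + 2n_A(n_A−1)(n_A−2)/(n(n−1)(n−2)) ). -/
/-!
Expanding the three subset sums, `∑_A X_A Y_A Z_A = ∑_{i,j,k} x_i y_j z_k · #{A | {i,j,k} ⊆ A}`, and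
the number of `n_A`-subsets containing a fixed `m`-set is `C(n, n_A) · n_A^(m) / n^(m)` (falling
factorials), a function `c` of `m = #{i,j,k}` alone. Writing `c(#{i,j,k})` through Kronecker deltas
of the coincidences among `i, j, k`, every term except the `δ_ij δ_ik` one contains a free index
and is killed by a zero sum, leaving `(c 1 - 3 c 2 + 2 c 3) ∑ x_i y_i z_i`.
-/

open Finset

variable {ι R : Type*}

theorem cast_descFactorial_three [Ring R] (n : ℕ) :
    (n.descFactorial 3 : R) = n * (n - 1) * (n - 2) := by
  rw [← descPochhammer_eval_eq_descFactorial R]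
  simp [descPochhammer_succ_eval]

theorem sum_mul_sum_mul_sum [CommSemiring R] (s t u : Finset ι) (f g h : ι → R) :
    (∑ i ∈ s, f i) * (∑ j ∈ t, g j) * (∑ k ∈ u, h k) =
      ∑ i ∈ s, ∑ j ∈ t, ∑ k ∈ u, f i * g j * h k := by
  rw [sum_mul_sum]
  simp_rw [sum_mul, mul_sum]

variable [DecidableEq ι]

theorem card_filter_superset_powersetCard {u s : Finset ι} (hs : s ⊆ u) {k : ℕ} (hk : #s ≤ k) :
    #{A ∈ powersetCard k u | s ⊆ A} = (#u - #s).choose (k - #s) := by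
  rw [← card_sdiff_of_subset hs, ← card_powersetCard]
  refine card_bij' (fun A _ => A \ s) (fun B _ => B ∪ s) ?_ ?_ ?_ ?_
  · simp only [mem_filter, mem_powersetCard, and_imp]
    intro A hAu hA hsA
    exact ⟨sdiff_subset_sdiff hAu le_rfl, by rw [card_sdiff_of_subset hsA, hA]⟩
  · simp only [mem_filter, mem_powersetCard, and_imp]
    intro B hBu hB
    have hBs : Disjoint B s := disjoint_of_subset_left hBu sdiff_disjoint
    refine ⟨⟨union_subset (hBu.trans sdiff_subset) hs, ?_⟩, subset_union_right⟩
    rw [card_union_of_disjoint hBs]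
    omega
  · intro A hA
    exact sdiff_union_of_subset (mem_filter.1 hA).2
  · intro B hB
    exact union_sdiff_cancel_right
      (disjoint_of_subset_left (mem_powersetCard.1 hB).1 sdiff_disjoint)

/-- Stated with falling factorials so that it also covers `k < #s`, where both sides vanish. -/
theorem card_filter_superset_powersetCard_mul_descFactorial {u s : Finset ι} (hs : s ⊆ u)
    (k : ℕ) :
    #{A ∈ powersetCard k u | s ⊆ A} * (#u).descFactorial #s =
      (#u).choose k * k.descFactorial #s := by
  obtain hk | hk := le_or_gt #s k
  · rw [card_filter_superset_powersetCard hs hk, Nat.descFactorial_eq_factorial_mul_choose,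
      Nat.descFactorial_eq_factorial_mul_choose]
    calc _ = (#s).factorial * ((#u).choose #s * (#u - #s).choose (k - #s)) := by ring
      _ = _ := by rw [← Nat.choose_mul hk]; ring
  · rw [Nat.descFactorial_eq_zero_iff_lt.2 hk, mul_zero, card_eq_zero.2, zero_mul]
    refine filter_eq_empty_iff.2 fun A hA hsA => ?_
    have := card_le_card hsA
    rw [(mem_powersetCard.1 hA).2] at this
    omega

theorem cast_card_filter_superset_powersetCard_univ [Fintype ι] [Field R] [CharZero R]
    (s : Finset ι) (k : ℕ) :
    (#{A ∈ powersetCard k univ | s ⊆ A} : R) =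
      (Fintype.card ι).choose k * k.descFactorial #s / (Fintype.card ι).descFactorial #s := by
  have hs : (Fintype.card ι).descFactorial #s ≠ 0 :=
    Nat.descFactorial_eq_zero_iff_lt.not.2 (card_le_univ s).not_gt
  rw [eq_div_iff (Nat.cast_ne_zero.2 hs)]
  exact_mod_cast card_filter_superset_powersetCard_mul_descFactorial (subset_univ s) k

theorem sum_mul_sum_mul_sum_eq_sum_card_filter [CommSemiring R] [Fintype ι]
    (𝒜 : Finset (Finset ι)) (x y z : ι → R) :
    ∑ A ∈ 𝒜, (∑ i ∈ A, x i) * (∑ i ∈ A, y i) * (∑ i ∈ A, z i) =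
      ∑ i, ∑ j, ∑ k, x i * y j * z k * #{A ∈ 𝒜 | {i, j, k} ⊆ A} := by
  have expand (A : Finset ι) : (∑ i ∈ A, x i) * (∑ i ∈ A, y i) * (∑ i ∈ A, z i) =
      ∑ i, ∑ j, ∑ k, if {i, j, k} ⊆ A then x i * y j * z k else 0 := by
    simp only [← Fintype.sum_ite_mem A, sum_mul_sum_mul_sum, ite_zero_mul_ite_zero,
      insert_subset_iff, singleton_subset_iff, and_assoc]
  rw [sum_congr rfl fun A _ => expand A]
  simp only [card_filter, Nat.cast_sum, Nat.cast_ite, Nat.cast_one, Nat.cast_zero, mul_sum,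
    mul_ite, mul_one, mul_zero]
  rw [sum_comm]; refine sum_congr rfl fun i _ => ?_
  rw [sum_comm]; refine sum_congr rfl fun j _ => ?_
  exact sum_comm

theorem apply_card_triple_eq_kronecker [CommRing R] (c : ℕ → R) (i j k : ι) :
    c #{i, j, k} =
      c 3 + (c 2 - c 3) * ((if i = j then 1 else 0) + (if i = k then 1 else 0) +
        (if j = k then 1 else 0)) +
      (c 1 - 3 * c 2 + 2 * c 3) * (if i = j then 1 else 0) * (if i = k then 1 else 0) := by
  by_cases hij : i = j <;> by_cases hik : i = k <;> by_cases hjk : j = k <;> simp_all; ring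

theorem sum_mul_mul_apply_card_triple [CommRing R] [Fintype ι] (c : ℕ → R) {x y z : ι → R}
    (hx : ∑ i, x i = 0) (hy : ∑ i, y i = 0) (hz : ∑ i, z i = 0) :
    ∑ i, ∑ j, ∑ k, x i * y j * z k * c #{i, j, k} =
      (c 1 - 3 * c 2 + 2 * c 3) * ∑ i, x i * y i * z i := by
  simp only [apply_card_triple_eq_kronecker c, mul_add, mul_ite, mul_one, mul_zero,
    sum_add_distrib, sum_ite_irrel, sum_const_zero, sum_ite_eq, mem_univ, if_true]
  simp only [mul_assoc, ← mul_sum, ← sum_mul, hx, hy, hz, mul_zero, zero_mul, sum_const_zero,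
    zero_add]
  rw [mul_sum, ← sum_add_distrib]
  exact sum_congr rfl fun _ _ => by ring

theorem stmt4_general (n nA : ℕ) (hn : 3 ≤ n) (h2 : nA ≤ n)
    (x y z : Fin n → ℝ)
    (hx : ∑ i, x i = 0) (hy : ∑ i, y i = 0) (hz : ∑ i, z i = 0) :
    (∑ A ∈ Finset.powersetCard nA (Finset.univ : Finset (Fin n)),
        ((nA : ℝ)⁻¹ * ∑ i ∈ A, x i) * ((nA : ℝ)⁻¹ * ∑ i ∈ A, y i) *
          ((nA : ℝ)⁻¹ * ∑ i ∈ A, z i)) /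
      ((Finset.powersetCard nA (Finset.univ : Finset (Fin n))).card : ℝ)
    = ((n : ℝ) / (nA : ℝ) ^ 3) *
        ((nA : ℝ) / n - 3 * nA * ((nA : ℝ) - 1) / ((n : ℝ) * ((n : ℝ) - 1))
          + 2 * nA * ((nA : ℝ) - 1) * ((nA : ℝ) - 2) /
              ((n : ℝ) * ((n : ℝ) - 1) * ((n : ℝ) - 2))) *
        ((n : ℝ)⁻¹ * ∑ i, x i * y i * z i) := by
  set c : ℕ → ℝ := fun m => n.choose nA * nA.descFactorial m / n.descFactorial m with hc
  have hsum : ∑ A ∈ powersetCard nA univ, (∑ i ∈ A, x i) * (∑ i ∈ A, y i) * (∑ i ∈ A, z i) =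
      (c 1 - 3 * c 2 + 2 * c 3) * ∑ i, x i * y i * z i := by
    rw [sum_mul_sum_mul_sum_eq_sum_card_filter]
    simp only [cast_card_filter_superset_powersetCard_univ, Fintype.card_fin]
    exact sum_mul_mul_apply_card_triple c hx hy hz
  have hC : (n.choose nA : ℝ) ≠ 0 := by exact_mod_cast (Nat.choose_pos h2).ne'
  have hn3 : (3 : ℝ) ≤ n := by exact_mod_cast hn
  have hn0 : (n : ℝ) ≠ 0 := by positivity
  have hn1 : (n : ℝ) - 1 ≠ 0 := by linarith
  have hn2 : (n : ℝ) - 2 ≠ 0 := by linarith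
  simp_rw [show ∀ a b c : ℝ, ((nA : ℝ)⁻¹ * a) * ((nA : ℝ)⁻¹ * b) * ((nA : ℝ)⁻¹ * c) =
      (nA : ℝ)⁻¹ ^ 3 * (a * b * c) from fun _ _ _ => by ring,
    ← mul_sum, hsum, card_powersetCard, card_univ, Fintype.card_fin]
  simp only [hc, Nat.descFactorial_one, Nat.cast_descFactorial_two, cast_descFactorial_three]
  field_simp

/-- For zero-mean `x, y, z`, `E[x̄_A ȳ_A z̄_A] = N_AAA · (1/n) ∑ x_i y_i z_i`. -/
theorem stmt4 (n nA : ℕ) (hn : 3 ≤ n) (h1 : 1 ≤ nA) (h2 : nA ≤ n)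
    (x y z : Fin n → ℝ)
    (hx : ∑ i, x i = 0) (hy : ∑ i, y i = 0) (hz : ∑ i, z i = 0) :
    (∑ A ∈ Finset.powersetCard nA (Finset.univ : Finset (Fin n)),
        ((nA : ℝ)⁻¹ * ∑ i ∈ A, x i) * ((nA : ℝ)⁻¹ * ∑ i ∈ A, y i) *
          ((nA : ℝ)⁻¹ * ∑ i ∈ A, z i)) /
      ((Finset.powersetCard nA (Finset.univ : Finset (Fin n))).card : ℝ)
    = ((n : ℝ) / (nA : ℝ) ^ 3) *
        ((nA : ℝ) / n - 3 * nA * ((nA : ℝ) - 1) / ((n : ℝ) * ((n : ℝ) - 1))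
          + 2 * nA * ((nA : ℝ) - 1) * ((nA : ℝ) - 2) /
              ((n : ℝ) * ((n : ℝ) - 1) * ((n : ℝ) - 2))) *
        ((n : ℝ)⁻¹ * ∑ i, x i * y i * z i) :=
  stmt4_general n nA hn h2 x y z hx hy hz
end

section
/- For three real-valued functions x, y, z on {1,...,n} (not necessarily centered), the algebraic identity n³ ∑_{i=1}^n (x_i − x̄)(y_i − ȳ)(z_i − z̄) = (n³−3n²+2n) ∑_i x'_i y'_i z'_i − (n²−2n) ∑_{i≠j}(x'_i y'_i z'_j + x'_i y'_j z'_j + x'_j y'_i z'_i) + 2n ∑_{i,j,s pairwise distinct} x'_i y'_j z'_s holds, where x'_i = x_i − x̄ etc. and the centered sequences sum to zero (equivalently, the identity holds when ∑ x_i = ∑ y_i = ∑ z_i = 0 after replacing x'_i by x_i). -/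
/-!
Once the sequences are centred, every off-diagonal sum collapses onto the diagonal sum
`S = ∑ xᵢ yᵢ zᵢ`: each of the three sums over pairs `i ≠ j` equals `-S`, and by
inclusion–exclusion the sum over pairwise distinct triples equals `2 S`. The right-hand side is
then `(n³ - 3n² + 2n) S + 3 (n² - 2n) S + 4n S = n³ S`.
-/

open Finset

section OffDiagonalSums

variable {ι R : Type*} [Fintype ι] [DecidableEq ι] [CommRing R]

theorem sum_sum_sdiff_singleton_mul (f g : ι → R) :
    ∑ i, ∑ j ∈ univ \ {i}, f i * g j = (∑ i, f i) * ∑ i, g i - ∑ i, f i * g i := by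
  simp only [sdiff_singleton_eq_erase, ← mul_sum, sum_erase_eq_sub (mem_univ _),
    sum_sub_distrib, sum_mul]

theorem sum_sdiff_pair {i j : ι} (hij : i ≠ j) (h : ι → R) :
    ∑ s ∈ univ \ {i, j}, h s = ∑ s, h s - h i - h j := by
  rw [sum_sdiff_eq_sub (subset_univ _), sum_pair hij, sub_sub]

theorem sum_sum_sum_sdiff_pair_mul (f g h : ι → R) :
    ∑ i, ∑ j ∈ univ \ {i}, ∑ s ∈ univ \ {i, j}, f i * g j * h s
      = (∑ i, f i) * (∑ i, g i) * ∑ i, h i - (∑ i, f i * g i) * ∑ i, h i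
        - (∑ i, f i * h i) * ∑ i, g i - (∑ i, f i) * (∑ i, g i * h i)
        + 2 * ∑ i, f i * g i * h i := by
  calc _ = ∑ i, ∑ j ∈ univ \ {i}, (f i * (∑ s, h s - h i) * g j - f i * (g j * h j)) := by
        refine sum_congr rfl fun i _ => sum_congr rfl fun j hj => ?_
        rw [← mul_sum, sum_sdiff_pair (by simpa [eq_comm] using hj)]
        ring
    _ = _ := by
        simp only [sum_sub_distrib, sum_sum_sdiff_singleton_mul, mul_sub, sub_mul, ← sum_mul]
        simp only [mul_right_comm _ (∑ s, h s), mul_right_comm _ (h _), ← sum_mul, ← mul_assoc]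
        ring

end OffDiagonalSums

section ZeroSum

variable {ι R : Type*} [Fintype ι] [DecidableEq ι] [CommRing R] {X Y Z : ι → R}

theorem sum_sum_sdiff_singleton_of_sum_eq_zero (hX : ∑ i, X i = 0) (hZ : ∑ i, Z i = 0) :
    ∑ i, ∑ j ∈ univ \ {i}, (X i * Y i * Z j + X i * Y j * Z j + X j * Y i * Z i)
      = -3 * ∑ i, X i * Y i * Z i := by
  calc _ = ∑ i, ∑ j ∈ univ \ {i}, X i * Y i * Z j + ∑ i, ∑ j ∈ univ \ {i}, X i * (Y j * Z j)
        + ∑ i, ∑ j ∈ univ \ {i}, Y i * Z i * X j := by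
        simp only [← sum_add_distrib]
        exact sum_congr rfl fun i _ => sum_congr rfl fun j _ => by ring
    _ = _ := by
        have hYZX : ∑ i, Y i * Z i * X i = ∑ i, X i * Y i * Z i :=
          sum_congr rfl fun i _ => by ring
        simp only [sum_sum_sdiff_singleton_mul, hX, hZ, hYZX]
        simp only [← mul_assoc]
        ring

theorem sum_sum_sum_sdiff_pair_of_sum_eq_zero (hX : ∑ i, X i = 0) (hY : ∑ i, Y i = 0)
    (hZ : ∑ i, Z i = 0) :
    ∑ i, ∑ j ∈ univ \ {i}, ∑ s ∈ univ \ {i, j}, X i * Y j * Z s = 2 * ∑ i, X i * Y i * Z i := by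
  rw [sum_sum_sum_sdiff_pair_mul, hX, hY, hZ]
  ring

end ZeroSum

theorem sum_sub_inv_card_mul_sum_eq_zero {ι K : Type*} [Fintype ι] [Field K] [CharZero K]
    (x : ι → K) : ∑ i, (x i - (Fintype.card ι : K)⁻¹ * ∑ j, x j) = 0 := by
  rw [sum_sub_distrib, sum_const, card_univ, nsmul_eq_mul]
  rcases isEmpty_or_nonempty ι with hι | hι
  · simp
  · rw [mul_inv_cancel_left₀ (by simp [Fintype.card_ne_zero]), sub_self]

/-- Algebraic identity: with `x'_i = x_i − x̄`, etc.,
`n³ ∑ (x_i−x̄)(y_i−ȳ)(z_i−z̄) = (n³−3n²+2n) ∑ x'y'z' − (n²−2n) ∑_{i≠j}(...) + 2n ∑_{distinct}`. -/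
theorem stmt6 (n : ℕ) (x y z : Fin n → ℝ)
    (xbar ybar zbar : ℝ)
    (hx : xbar = (n : ℝ)⁻¹ * ∑ i, x i)
    (hy : ybar = (n : ℝ)⁻¹ * ∑ i, y i)
    (hz : zbar = (n : ℝ)⁻¹ * ∑ i, z i) :
    (n : ℝ) ^ 3 * ∑ i, (x i - xbar) * (y i - ybar) * (z i - zbar)
    = ((n : ℝ) ^ 3 - 3 * (n : ℝ) ^ 2 + 2 * n) *
        ∑ i, (x i - xbar) * (y i - ybar) * (z i - zbar)
      - ((n : ℝ) ^ 2 - 2 * n) *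
        ∑ i, ∑ j ∈ Finset.univ \ {i},
          ((x i - xbar) * (y i - ybar) * (z j - zbar)
            + (x i - xbar) * (y j - ybar) * (z j - zbar)
            + (x j - xbar) * (y i - ybar) * (z i - zbar))
      + 2 * (n : ℝ) *
        ∑ i, ∑ j ∈ Finset.univ \ {i}, ∑ s ∈ Finset.univ \ {i, j},
          (x i - xbar) * (y j - ybar) * (z s - zbar) := by
  have centered : ∀ w : Fin n → ℝ, ∑ i, (w i - (n : ℝ)⁻¹ * ∑ j, w j) = 0 := by
    simpa using sum_sub_inv_card_mul_sum_eq_zero (ι := Fin n) (K := ℝ)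
  subst hx hy hz
  rw [sum_sum_sdiff_singleton_of_sum_eq_zero (centered x) (centered z),
    sum_sum_sum_sdiff_pair_of_sum_eq_zero (centered x) (centered y) (centered z)]
  ring
end

section
/- Under complete randomization with treated set A of size n_A ≥ 3 out of n ≥ 3 units, for zero-mean sequences x, y, z: E[∑_{(i,j,s) pairwise distinct} T_i T_j T_s x_i y_j z_s] = (2 n_A(n_A−1)(n_A−2)/(n(n−1)(n−2))) ∑_{i=1}^n x_i y_i z_i, where T_k is the indicator of k ∈ A. -/
/-!
Write the sum over distinct triples of `A` as the sum over all distinct triples `(i, j, s)` of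
`[{i, j, s} ⊆ A] x_i y_j z_s`. Averaging over `A` replaces the indicator by the probability
`C(n-3, nA-3) / C(n, nA) = nA(nA-1)(nA-2) / (n(n-1)(n-2))` that a fixed triple lies in `A`.
For zero-mean sequences, inclusion–exclusion on the excluded indices collapses the sum over all
distinct triples to `2 ∑ x_i y_i z_i`.
-/

open Finset

theorem Nat.cast_choose_three {K : Type*} [Field K] [CharZero K] (a : ℕ) :
    (a.choose 3 : K) = a * (a - 1) * (a - 2) / 6 := by
  rcases a with _ | _ | _ | a
  · simp
  · simp [Nat.choose]
  · simp
  · have h : ((a + 3).descFactorial 3 : K) = (Nat.factorial 3 * (a + 3).choose 3 : ℕ) := by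
      rw [Nat.descFactorial_eq_factorial_mul_choose]
    simp only [Nat.descFactorial, Nat.factorial] at h
    push_cast at h ⊢
    linear_combination -h / 6

theorem choose_sub_three_div_choose {K : Type*} [Field K] [LinearOrder K] [IsStrictOrderedRing K]
    {n m : ℕ} (hm : 3 ≤ m) (hmn : m ≤ n) :
    ((n - 3).choose (m - 3) : K) / n.choose m =
      m * (m - 1) * (m - 2) / (n * (n - 1) * (n - 2)) := by
  have h := congrArg (Nat.cast (R := K)) (Nat.choose_mul (n := n) hm)
  push_cast [Nat.cast_choose_three] at h
  have hn : (3 : K) ≤ n := by exact_mod_cast hm.trans hmn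
  rw [div_eq_div_iff (by exact_mod_cast (Nat.choose_pos hmn).ne')
    (mul_pos (mul_pos (by linarith) (by linarith)) (by linarith)).ne']
  linear_combination -6 * h

theorem sum_distinct_triples_eq_sum_univ_ite {α M : Type*} [Fintype α] [DecidableEq α]
    [AddCommMonoid M] (A : Finset α) (f : α → α → α → M) :
    ∑ i ∈ A, ∑ j ∈ A \ {i}, ∑ s ∈ A \ {i, j}, f i j s =
      ∑ i, ∑ j ∈ univ \ {i}, ∑ s ∈ univ \ {i, j}, if {i, j, s} ⊆ A then f i j s else 0 := by
  simp only [insert_subset_iff, singleton_subset_iff, ite_and, sum_ite_irrel, sum_const_zero,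
    ← sum_filter, filter_mem_eq_inter, sdiff_inter_right_comm, univ_inter]

theorem card_eq_three_of_mem_sdiff {α : Type*} [DecidableEq α] {i j s : α} {u : Finset α}
    (hj : j ∈ u \ {i}) (hs : s ∈ u \ {i, j}) : #{i, j, s} = 3 := by
  simp only [mem_sdiff, mem_insert, mem_singleton, not_or] at hj hs
  exact card_eq_three.2 ⟨i, j, s, Ne.symm hj.2, Ne.symm hs.2.1, Ne.symm hs.2.2, rfl⟩

theorem sum_powersetCard_sum_distinct_triples {α M : Type*} [Fintype α] [DecidableEq α]
    [AddCommMonoid M] {m : ℕ} (hm : 3 ≤ m) (f : α → α → α → M) :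
    ∑ A ∈ powersetCard m univ, ∑ i ∈ A, ∑ j ∈ A \ {i}, ∑ s ∈ A \ {i, j}, f i j s =
      (Fintype.card α - 3).choose (m - 3) •
        ∑ i, ∑ j ∈ univ \ {i}, ∑ s ∈ univ \ {i, j}, f i j s := by
  rw [sum_congr rfl fun A _ => sum_distinct_triples_eq_sum_univ_ite A f, smul_sum, sum_comm]
  refine sum_congr rfl fun i _ => ?_
  rw [sum_comm, smul_sum]
  refine sum_congr rfl fun j hj => ?_
  rw [smul_sum, sum_comm]
  refine sum_congr rfl fun s hs => ?_
  have h3 : #{i, j, s} = 3 := card_eq_three_of_mem_sdiff hj hs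
  rw [← sum_filter, sum_const, card_filter_powersetCard_subset _ _ _ (subset_univ _) (h3 ▸ hm),
    h3, card_univ]

theorem sum_distinct_triples_mul_of_sum_eq_zero {α R : Type*} [Fintype α] [DecidableEq α]
    [CommRing R] {x y z : α → R} (hx : ∑ i, x i = 0) (hy : ∑ i, y i = 0) (hz : ∑ i, z i = 0) :
    ∑ i, ∑ j ∈ univ \ {i}, ∑ s ∈ univ \ {i, j}, x i * y j * z s = 2 * ∑ i, x i * y i * z i := by
  have sum_compl_singleton (i : α) (g : α → R) : ∑ j ∈ univ \ {i}, g j = ∑ j, g j - g i := by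
    rw [sum_sdiff_eq_sub (subset_univ _), sum_singleton]
  have sum_compl_pair {i j : α} (hji : j ∈ univ \ {i}) :
      ∑ s ∈ univ \ {i, j}, z s = -z i - z j := by
    rw [sum_sdiff_eq_sub (subset_univ _), hz, sum_pair (by simpa [eq_comm] using hji)]
    ring
  calc ∑ i, ∑ j ∈ univ \ {i}, ∑ s ∈ univ \ {i, j}, x i * y j * z s
      = ∑ i, ∑ j ∈ univ \ {i}, (-(x i * z i) * y j - x i * (y j * z j)) :=
        sum_congr rfl fun i _ => sum_congr rfl fun j hj => by
          rw [← mul_sum, sum_compl_pair hj]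
          ring
    _ = ∑ i, (2 * (x i * y i * z i) - x i * ∑ j, y j * z j) :=
        sum_congr rfl fun i _ => by
          rw [sum_sub_distrib, ← mul_sum, ← mul_sum, sum_compl_singleton, sum_compl_singleton, hy]
          ring
    _ = 2 * ∑ i, x i * y i * z i := by
        rw [sum_sub_distrib, ← mul_sum, ← sum_mul, hx]
        ring

theorem stmt10_general (n nA : ℕ) (h1 : 3 ≤ nA) (h2 : nA ≤ n)
    (x y z : Fin n → ℝ)
    (hx : ∑ i, x i = 0) (hy : ∑ i, y i = 0) (hz : ∑ i, z i = 0) :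
    (∑ A ∈ Finset.powersetCard nA (Finset.univ : Finset (Fin n)),
        ∑ i ∈ A, ∑ j ∈ A \ {i}, ∑ s ∈ A \ {i, j}, x i * y j * z s) /
      ((Finset.powersetCard nA (Finset.univ : Finset (Fin n))).card : ℝ)
    = (2 * (nA : ℝ) * ((nA : ℝ) - 1) * ((nA : ℝ) - 2) /
          ((n : ℝ) * ((n : ℝ) - 1) * ((n : ℝ) - 2))) *
        ∑ i, x i * y i * z i := by
  rw [sum_powersetCard_sum_distinct_triples h1, sum_distinct_triples_mul_of_sum_eq_zero hx hy hz,
    card_powersetCard, card_univ, Fintype.card_fin, nsmul_eq_mul, mul_div_right_comm,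
    choose_sub_three_div_choose h1 h2]
  ring

/-- `E[∑_{(i,j,s) pairwise distinct in A} x_i y_j z_s]
  = 2 n_A(n_A−1)(n_A−2)/(n(n−1)(n−2)) ∑ x_i y_i z_i` for zero-mean sequences. -/
theorem stmt10 (n nA : ℕ) (hn : 3 ≤ n) (h1 : 3 ≤ nA) (h2 : nA ≤ n)
    (x y z : Fin n → ℝ)
    (hx : ∑ i, x i = 0) (hy : ∑ i, y i = 0) (hz : ∑ i, z i = 0) :
    (∑ A ∈ Finset.powersetCard nA (Finset.univ : Finset (Fin n)),
        ∑ i ∈ A, ∑ j ∈ A \ {i}, ∑ s ∈ A \ {i, j}, x i * y j * z s) /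
      ((Finset.powersetCard nA (Finset.univ : Finset (Fin n))).card : ℝ)
    = (2 * (nA : ℝ) * ((nA : ℝ) - 1) * ((nA : ℝ) - 2) /
          ((n : ℝ) * ((n : ℝ) - 1) * ((n : ℝ) - 2))) *
        ∑ i, x i * y i * z i :=
  stmt10_general n nA h1 h2 x y z hx hy hz
end

section
/- The within-group third moment estimator is unbiased after a finite-sample correction: with N_Adj,A = (n(n−1)(n−2)/((n_A−1)(n_A−2)n_A)) · (n_A³/n³), one has N_Adj,A · E[(1/n_A) ∑_{i∈A} (x_i − x̄_A)(y_i − ȳ_A)(z_i − z̄_A)] = (1/n) ∑_{i=1}^n (x_i − x̄)(y_i − ȳ)(z_i − z̄). -/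
/-!
Up to the factor `m²`, the within-sample third central co-moment of a sample `A` of size `m` is
the sum, over ordered triples of distinct units of `A`, of the kernel
`(x i - x j) * (y i - y k) * (z i - z j)`: this kernel vanishes when `i = j` or `k = i` and is
antisymmetric in `i, j` on `j = k`, so its sum over distinct triples is its sum over all triples,
which is computed in centred coordinates. Every triple of distinct units lies in
`C(n - 3, m - 3)` of the `C(n, m)` samples, so the average over samples of this U-statistic is
`m (m - 1) (m - 2) / (n (n - 1) (n - 2))` times its population value, which is exactly what the
correction factor compensates.
-/

open Finset

section DistinctTriples

variable {α M : Type*} [DecidableEq α]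

def distinctTripleSum [AddCommMonoid M] (s : Finset α) (g : α → α → α → M) : M :=
  ∑ i ∈ s, ∑ j ∈ s.erase i, ∑ k ∈ (s.erase i).erase j, g i j k

theorem distinctTripleSum_congr [AddCommMonoid M] {s : Finset α} {g g' : α → α → α → M}
    (h : ∀ i ∈ s, ∀ j ∈ s.erase i, ∀ k ∈ (s.erase i).erase j, g i j k = g' i j k) :
    distinctTripleSum s g = distinctTripleSum s g' :=
  sum_congr rfl fun i hi => sum_congr rfl fun j hj => sum_congr rfl fun k hk => h i hi j hj k hk

theorem distinctTripleSum_of_subset [AddCommMonoid M] {A s : Finset α} (hA : A ⊆ s)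
    (g : α → α → α → M) :
    distinctTripleSum A g =
      distinctTripleSum s (fun i j k => if i ∈ A ∧ j ∈ A ∧ k ∈ A then g i j k else 0) := by
  simp only [distinctTripleSum, ite_and, sum_ite_irrel, sum_const_zero, sum_ite_mem, erase_inter,
    inter_eq_right.mpr hA]

theorem sum_powersetCard_distinctTripleSum [AddCommMonoid M] (s : Finset α) {m : ℕ}
    (hm : 3 ≤ m) (g : α → α → α → M) :
    ∑ A ∈ s.powersetCard m, distinctTripleSum A g =
      (#s - 3).choose (m - 3) • distinctTripleSum s g := by
  have hcount : ∀ i ∈ s, ∀ j ∈ s.erase i, ∀ k ∈ (s.erase i).erase j,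
      ∑ A ∈ s.powersetCard m, (if i ∈ A ∧ j ∈ A ∧ k ∈ A then g i j k else 0) =
        (#s - 3).choose (m - 3) • g i j k := by
    intro i hi j hj k hk
    have hsub : {i, j, k} ⊆ s := by
      simp only [insert_subset_iff, singleton_subset_iff]
      exact ⟨hi, mem_of_mem_erase hj, mem_of_mem_erase (mem_of_mem_erase hk)⟩
    have hcard : #{i, j, k} = 3 := by
      rw [card_insert_of_notMem, card_pair]
      · exact (ne_of_mem_erase hk).symm
      · simp [(ne_of_mem_erase hj).symm, (ne_of_mem_erase (mem_of_mem_erase hk)).symm]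
    rw [← sum_filter, sum_const, ← hcard, ← card_filter_powersetCard_subset _ _ _ hsub
      (hcard ▸ hm)]
    simp only [insert_subset_iff, singleton_subset_iff]
  calc ∑ A ∈ s.powersetCard m, distinctTripleSum A g
      = ∑ A ∈ s.powersetCard m, distinctTripleSum s
          (fun i j k => if i ∈ A ∧ j ∈ A ∧ k ∈ A then g i j k else 0) :=
        sum_congr rfl fun A hA => distinctTripleSum_of_subset (mem_powersetCard.mp hA).1 g
    _ = distinctTripleSum s (fun i j k =>
          ∑ A ∈ s.powersetCard m, if i ∈ A ∧ j ∈ A ∧ k ∈ A then g i j k else 0) := by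
        simp only [distinctTripleSum]
        rw [sum_comm]
        refine sum_congr rfl fun i _ => ?_
        rw [sum_comm]
        refine sum_congr rfl fun j _ => ?_
        rw [sum_comm]
    _ = (#s - 3).choose (m - 3) • distinctTripleSum s g := by
        rw [distinctTripleSum_congr hcount]
        simp only [distinctTripleSum, smul_sum]

theorem distinctTripleSum_eq_sum [AddCommGroup M] [IsAddTorsionFree M] (s : Finset α)
    {g : α → α → α → M} (hii : ∀ i k, g i i k = 0) (hiji : ∀ i j, g i j i = 0)
    (hijj : ∀ i j, g j i i = -g i j j) :
    distinctTripleSum s g = ∑ i ∈ s, ∑ j ∈ s, ∑ k ∈ s, g i j k := by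
  have hdiag : ∑ i ∈ s, ∑ j ∈ s, g i j j = 0 := by
    refine self_eq_neg.mp ?_
    conv_lhs => rw [sum_comm]
    rw [← sum_neg_distrib]
    exact sum_congr rfl fun i _ => by rw [← sum_neg_distrib]; exact sum_congr rfl fun j _ => hijj i j
  have hinner : ∀ i ∈ s, ∑ j ∈ s.erase i, ∑ k ∈ (s.erase i).erase j, g i j k =
      ∑ j ∈ s, (∑ k ∈ s, g i j k - g i j j) := by
    intro i hi
    rw [← sum_erase_add _ _ hi]
    simp only [hii, sum_const_zero, sub_zero, add_zero]
    refine sum_congr rfl fun j hj => ?_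
    rw [sum_erase_eq_sub hj, sum_erase_eq_sub hi, hiji, sub_zero]
  rw [distinctTripleSum, sum_congr rfl hinner]
  simp only [sum_sub_distrib, hdiag, sub_zero]

end DistinctTriples

section ThirdComoment

variable {α K : Type*} [Field K]

def thirdComomentKernel (x y z : α → K) (i j k : α) : K :=
  (x i - x j) * (y i - y k) * (z i - z j)

theorem sum_thirdComomentKernel_of_sum_eq_zero (A : Finset α) {u v w : α → K}
    (hu : ∑ i ∈ A, u i = 0) (hv : ∑ i ∈ A, v i = 0) (hw : ∑ i ∈ A, w i = 0) :
    ∑ i ∈ A, ∑ j ∈ A, ∑ k ∈ A, thirdComomentKernel u v w i j k =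
      (#A : K) ^ 2 * ∑ i ∈ A, u i * v i * w i := by
  have hk : ∀ i j, ∑ k ∈ A, thirdComomentKernel u v w i j k =
      #A * v i * ((u i - u j) * (w i - w j)) := by
    intro i j
    simp only [thirdComomentKernel]
    rw [← sum_mul, ← mul_sum, sum_sub_distrib, hv, sum_const, nsmul_eq_mul]
    ring
  have hj : ∀ i, ∑ j ∈ A, (u i - u j) * (w i - w j) = #A * u i * w i + ∑ j ∈ A, u j * w j := by
    intro i
    simp only [sub_mul, mul_sub, sum_sub_distrib, ← mul_sum, ← sum_mul, hu, hw, sum_const,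
      nsmul_eq_mul]
    ring
  calc _ = ∑ i ∈ A, #A * v i * (#A * u i * w i + ∑ j ∈ A, u j * w j) := by
        simp only [hk, ← mul_sum, hj]
    _ = ∑ i ∈ A, (#A : K) ^ 2 * (u i * v i * w i) + (∑ i ∈ A, #A * v i) * ∑ j ∈ A, u j * w j := by
        rw [sum_mul, ← sum_add_distrib]
        exact sum_congr rfl fun i _ => by ring
    _ = _ := by rw [← mul_sum, ← mul_sum, hv, mul_zero, zero_mul, add_zero]

variable [CharZero K]

theorem sum_thirdComomentKernel (A : Finset α) (x y z : α → K) :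
    ∑ i ∈ A, ∑ j ∈ A, ∑ k ∈ A, thirdComomentKernel x y z i j k =
      (#A : K) ^ 2 * ∑ i ∈ A, (x i - (#A : K)⁻¹ * ∑ k ∈ A, x k) *
        (y i - (#A : K)⁻¹ * ∑ k ∈ A, y k) * (z i - (#A : K)⁻¹ * ∑ k ∈ A, z k) := by
  have hcenter : ∀ f : α → K, ∑ i ∈ A, (f i - (#A : K)⁻¹ * ∑ k ∈ A, f k) = 0 := by
    intro f
    rcases A.eq_empty_or_nonempty with rfl | hA
    · simp
    rw [sum_sub_distrib, sum_const, nsmul_eq_mul, mul_inv_cancel_left₀ (by simp [hA.ne_empty]),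
      sub_self]
  rw [← sum_thirdComomentKernel_of_sum_eq_zero A (hcenter x) (hcenter y) (hcenter z)]
  simp only [thirdComomentKernel, sub_sub_sub_cancel_right]

def thirdCentralComoment (A : Finset α) (x y z : α → K) : K :=
  (#A : K)⁻¹ * ∑ i ∈ A, (x i - (#A : K)⁻¹ * ∑ k ∈ A, x k) *
    (y i - (#A : K)⁻¹ * ∑ k ∈ A, y k) * (z i - (#A : K)⁻¹ * ∑ k ∈ A, z k)

theorem thirdCentralComoment_eq_distinctTripleSum [DecidableEq α] (A : Finset α)
    (x y z : α → K) :
    thirdCentralComoment A x y z =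
      ((#A : K) ^ 3)⁻¹ * distinctTripleSum A (thirdComomentKernel x y z) := by
  rw [distinctTripleSum_eq_sum, sum_thirdComomentKernel, thirdCentralComoment]
  · rcases A.eq_empty_or_nonempty with rfl | hA
    · simp
    have : (#A : K) ≠ 0 := by simp [hA.ne_empty]
    field_simp
  all_goals intros; simp only [thirdComomentKernel]; ring

end ThirdComoment

theorem Nat.choose_mul_descFactorial {n m s : ℕ} (hsm : s ≤ m) :
    n.choose m * m.descFactorial s = n.descFactorial s * (n - s).choose (m - s) := by
  rw [descFactorial_eq_factorial_mul_choose, descFactorial_eq_factorial_mul_choose,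
    mul_left_comm, choose_mul hsm, mul_assoc]

theorem Nat.cast_descFactorial_three {R : Type*} [CommRing R] (k : ℕ) :
    (k.descFactorial 3 : R) = k * (k - 1) * (k - 2) := by
  obtain hk | hk := lt_or_ge k 2
  · interval_cases k <;> simp [Nat.descFactorial]
  · simp [Nat.descFactorial_succ, Nat.cast_sub hk, Nat.cast_sub (one_le_two.trans hk)]
    ring

theorem stmt11_general (n nA : ℕ) (h1 : 3 ≤ nA) (h2 : nA ≤ n)
    (x y z : Fin n → ℝ) :
    ((n : ℝ) * ((n : ℝ) - 1) * ((n : ℝ) - 2) /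
        (((nA : ℝ) - 1) * ((nA : ℝ) - 2) * (nA : ℝ)) * ((nA : ℝ) ^ 3 / (n : ℝ) ^ 3)) *
      ((∑ A ∈ Finset.powersetCard nA (Finset.univ : Finset (Fin n)),
          (nA : ℝ)⁻¹ * ∑ i ∈ A,
            (x i - (nA : ℝ)⁻¹ * ∑ k ∈ A, x k) *
            (y i - (nA : ℝ)⁻¹ * ∑ k ∈ A, y k) *
            (z i - (nA : ℝ)⁻¹ * ∑ k ∈ A, z k)) /
        ((Finset.powersetCard nA (Finset.univ : Finset (Fin n))).card : ℝ))
    = (n : ℝ)⁻¹ * ∑ i,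
        (x i - (n : ℝ)⁻¹ * ∑ k, x k) * (y i - (n : ℝ)⁻¹ * ∑ k, y k) *
          (z i - (n : ℝ)⁻¹ * ∑ k, z k) := by
  have hsample : ∀ A ∈ powersetCard nA (univ : Finset (Fin n)),
      (nA : ℝ)⁻¹ * ∑ i ∈ A, (x i - (nA : ℝ)⁻¹ * ∑ k ∈ A, x k) *
          (y i - (nA : ℝ)⁻¹ * ∑ k ∈ A, y k) * (z i - (nA : ℝ)⁻¹ * ∑ k ∈ A, z k) =
        ((nA : ℝ) ^ 3)⁻¹ * distinctTripleSum A (thirdComomentKernel x y z) := by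
    intro A hA
    rw [← (mem_powersetCard.mp hA).2]
    exact thirdCentralComoment_eq_distinctTripleSum A x y z
  have hpopulation := thirdCentralComoment_eq_distinctTripleSum (univ : Finset (Fin n)) x y z
  rw [thirdCentralComoment, card_univ, Fintype.card_fin] at hpopulation
  have hchoose := congrArg (Nat.cast (R := ℝ)) (Nat.choose_mul_descFactorial (n := n) h1)
  push_cast [Nat.cast_descFactorial_three] at hchoose
  have hn : (n : ℝ) ≠ 0 := Nat.cast_ne_zero.mpr (by omega)
  have hnA : (nA : ℝ) ≠ 0 := Nat.cast_ne_zero.mpr (by omega)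
  have hnA1 : (nA : ℝ) - 1 ≠ 0 := sub_ne_zero.mpr (by norm_cast; omega)
  have hnA2 : (nA : ℝ) - 2 ≠ 0 := sub_ne_zero.mpr (by norm_cast; omega)
  have hC : (n.choose nA : ℝ) ≠ 0 := Nat.cast_ne_zero.mpr (Nat.choose_pos h2).ne'
  rw [sum_congr rfl hsample, ← mul_sum, sum_powersetCard_distinctTripleSum _ h1, hpopulation,
    card_univ, Fintype.card_fin, card_powersetCard, card_univ, Fintype.card_fin, nsmul_eq_mul]
  field_simp
  linear_combination -distinctTripleSum univ (thirdComomentKernel x y z) * hchoose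

/-- The corrected within-group third moment estimator is unbiased:
`N_Adj,A · E[(1/n_A) ∑_{i∈A} (x_i−x̄_A)(y_i−ȳ_A)(z_i−z̄_A)]
  = (1/n) ∑ (x_i−x̄)(y_i−ȳ)(z_i−z̄)`. -/
theorem stmt11 (n nA : ℕ) (hn : 3 ≤ n) (h1 : 3 ≤ nA) (h2 : nA ≤ n)
    (x y z : Fin n → ℝ) :
    ((n : ℝ) * ((n : ℝ) - 1) * ((n : ℝ) - 2) /
        (((nA : ℝ) - 1) * ((nA : ℝ) - 2) * (nA : ℝ)) * ((nA : ℝ) ^ 3 / (n : ℝ) ^ 3)) *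
      ((∑ A ∈ Finset.powersetCard nA (Finset.univ : Finset (Fin n)),
          (nA : ℝ)⁻¹ * ∑ i ∈ A,
            (x i - (nA : ℝ)⁻¹ * ∑ k ∈ A, x k) *
            (y i - (nA : ℝ)⁻¹ * ∑ k ∈ A, y k) *
            (z i - (nA : ℝ)⁻¹ * ∑ k ∈ A, z k)) /
        ((Finset.powersetCard nA (Finset.univ : Finset (Fin n))).card : ℝ))
    = (n : ℝ)⁻¹ * ∑ i,
        (x i - (n : ℝ)⁻¹ * ∑ k, x k) * (y i - (n : ℝ)⁻¹ * ∑ k, y k) *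
          (z i - (n : ℝ)⁻¹ * ∑ k, z k) :=
  stmt11_general n nA h1 h2 x y z
end

section
/- Freedman's covariance identity: under complete randomization with treated fraction p_A = n_A/n and control fraction p_B = n_B/n, and with covariates z_i ∈ ℝ^K satisfying ∑ z_i = 0 and centered outcomes a*_i with ∑ a*_i = 0, E[ z̄_B' D^{-1} p_A ((1/n_A)∑_{i∈A} a*_i z_i) ] = −(p_A/(n−1)) (1/n) ∑_i h_i a*_i, where D = (1/n)∑_i z_i z_i' (assumed invertible) and h_i = z_i' D^{-1} z_i. -/
open Finset Matrix

private lemma sum_dotProduct' {ι K : Type*} [Fintype K] (s : Finset ι) (f : ι → K → ℝ)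
    (w : K → ℝ) : (∑ i ∈ s, f i) ⬝ᵥ w = ∑ i ∈ s, f i ⬝ᵥ w := by
  simp only [dotProduct, Finset.sum_apply, Finset.sum_mul]
  exact Finset.sum_comm

private lemma dotProduct_sum' {ι K : Type*} [Fintype K] (s : Finset ι) (v : K → ℝ)
    (f : ι → K → ℝ) : v ⬝ᵥ (∑ i ∈ s, f i) = ∑ i ∈ s, v ⬝ᵥ f i := by
  simp only [dotProduct, Finset.sum_apply, Finset.mul_sum]
  exact Finset.sum_comm

private lemma mulVec_sum' {ι K : Type*} [Fintype K] [DecidableEq K] (M : Matrix K K ℝ)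
    (s : Finset ι) (f : ι → K → ℝ) : M *ᵥ (∑ i ∈ s, f i) = ∑ i ∈ s, M *ᵥ f i := by
  have := map_sum M.mulVecLin f s
  simpa only [Matrix.mulVecLin_apply] using this

private lemma count_superset {n : ℕ} (t : Finset (Fin n)) (k : ℕ) (htk : t.card ≤ k) :
    ((Finset.powersetCard k (Finset.univ : Finset (Fin n))).filter (fun A => t ⊆ A)).card
      = (n - t.card).choose (k - t.card) := by
  have hcompl : (tᶜ : Finset (Fin n)).card = n - t.card := by
    simp [Finset.card_compl]
  rw [← hcompl, ← Finset.card_powersetCard]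
  refine Finset.card_bij' (fun A _ => A \ t) (fun B _ => B ∪ t) ?_ ?_ ?_ ?_
  · intro A hA
    simp only [Finset.mem_filter, Finset.mem_powersetCard] at hA
    obtain ⟨⟨_, hcard⟩, hsub⟩ := hA
    rw [Finset.mem_powersetCard]
    constructor
    · intro x hx
      simp only [Finset.mem_sdiff] at hx
      simp [Finset.mem_compl, hx.2]
    · rw [Finset.card_sdiff_of_subset hsub, hcard]
  · intro B hB
    rw [Finset.mem_powersetCard] at hB
    obtain ⟨hBsub, hBcard⟩ := hB
    have hdisj : Disjoint B t := Finset.disjoint_left.mpr (fun x hx hxt => by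
      have := hBsub hx
      simp only [Finset.mem_compl] at this
      exact this hxt)
    simp only [Finset.mem_filter, Finset.mem_powersetCard]
    refine ⟨⟨Finset.subset_univ _, ?_⟩, Finset.subset_union_right⟩
    rw [Finset.card_union_of_disjoint hdisj, hBcard, Nat.sub_add_cancel htk]
  · intro A hA
    simp only [Finset.mem_filter] at hA
    exact Finset.sdiff_union_of_subset hA.2
  · intro B hB
    rw [Finset.mem_powersetCard] at hB
    have hdisj : Disjoint B t := Finset.disjoint_left.mpr (fun x hx hxt => by
      have := hB.1 hx
      simp only [Finset.mem_compl] at this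
      exact this hxt)
    show (B ∪ t) \ t = B
    rw [Finset.union_sdiff_distrib, Finset.sdiff_self, Finset.union_empty,
      Finset.sdiff_eq_self_of_disjoint hdisj]


/-- Freedman's covariance identity:
`E[ z̄_B' D⁻¹ (p_A (1/n_A) ∑_{i∈A} a*_i z_i) ] = −(p_A/(n−1)) (1/n) ∑ h_i a*_i`. -/
theorem stmt14 (n K nA : ℕ) (h1 : 1 ≤ nA) (h2 : nA < n)
    (z : Fin n → Fin K → ℝ) (hz : ∑ i, z i = 0)
    (a : Fin n → ℝ) (ha : ∑ i, a i = 0)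
    (D : Matrix (Fin K) (Fin K) ℝ)
    (hD : D = (n : ℝ)⁻¹ • ∑ i, vecMulVec (z i) (z i))
    (hDinv : IsUnit D.det)
    (h : Fin n → ℝ) (hh : ∀ i, h i = z i ⬝ᵥ (D⁻¹ *ᵥ z i)) :
    (∑ A ∈ Finset.powersetCard nA (Finset.univ : Finset (Fin n)),
        (((n - nA : ℕ) : ℝ)⁻¹ • ∑ i ∈ Aᶜ, z i) ⬝ᵥ
          (D⁻¹ *ᵥ (((nA : ℝ) / (n : ℝ)) • ((nA : ℝ)⁻¹ • ∑ i ∈ A, a i • z i)))) /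
      ((Finset.powersetCard nA (Finset.univ : Finset (Fin n))).card : ℝ)
    = -(((nA : ℝ) / (n : ℝ)) / ((n : ℝ) - 1)) * ((n : ℝ)⁻¹ * ∑ i, h i * a i) := by
  classical
  set P := Finset.powersetCard nA (Finset.univ : Finset (Fin n)) with hP
  set g : Fin n → Fin n → ℝ := fun i j => z i ⬝ᵥ (D⁻¹ *ᵥ z j) with hg
  set c : ℝ := ((n - nA : ℕ) : ℝ)⁻¹ * (((nA : ℝ) / (n : ℝ)) * (nA : ℝ)⁻¹) with hc
  -- per-A scalarization
  have key : ∀ A : Finset (Fin n), A ∈ P →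
      ((((n - nA : ℕ) : ℝ)⁻¹ • ∑ i ∈ Aᶜ, z i) ⬝ᵥ
          (D⁻¹ *ᵥ (((nA : ℝ) / (n : ℝ)) • ((nA : ℝ)⁻¹ • ∑ i ∈ A, a i • z i))))
        = -(c * ∑ i ∈ A, ∑ j ∈ A, a j * g i j) := by
    intro A _
    have hAc : ∑ i ∈ Aᶜ, z i = -∑ i ∈ A, z i := by
      have hsum : (∑ i ∈ A, z i) + ∑ i ∈ Aᶜ, z i = 0 := by
        rw [Finset.sum_add_sum_compl]; exact hz
      exact eq_neg_of_add_eq_zero_right hsum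
    have expand : (∑ i ∈ A, z i) ⬝ᵥ (D⁻¹ *ᵥ ∑ j ∈ A, a j • z j)
        = ∑ i ∈ A, ∑ j ∈ A, a j * g i j := by
      rw [mulVec_sum', sum_dotProduct']
      refine Finset.sum_congr rfl fun i _ => ?_
      rw [dotProduct_sum']
      refine Finset.sum_congr rfl fun j _ => ?_
      simp only [Matrix.mulVec_smul, dotProduct_smul, smul_eq_mul, hg]
    rw [hAc, smul_dotProduct, Matrix.mulVec_smul, Matrix.mulVec_smul, dotProduct_smul,
      dotProduct_smul, neg_dotProduct, expand, smul_eq_mul, smul_eq_mul, smul_eq_mul, hc]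
    ring
  -- counts
  set c2n : ℕ := if 2 ≤ nA then (n - 2).choose (nA - 2) else 0 with hc2n
  have count1 : ∀ i : Fin n, (P.filter (fun A => i ∈ A ∧ i ∈ A)).card = (n - 1).choose (nA - 1) := by
    intro i
    have := count_superset ({i} : Finset (Fin n)) nA (by simpa using h1)
    simp only [Finset.card_singleton, Finset.singleton_subset_iff] at this
    rw [← this, hP]
    congr 1
    ext A
    simp
  have count2 : ∀ i j : Fin n, i ≠ j →
      (P.filter (fun A => i ∈ A ∧ j ∈ A)).card = c2n := by
    intro i j hij
    rw [hc2n]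
    by_cases hnA2 : 2 ≤ nA
    · rw [if_pos hnA2]
      have hcard : ({i, j} : Finset (Fin n)).card = 2 := Finset.card_pair hij
      have := count_superset ({i, j} : Finset (Fin n)) nA (by rw [hcard]; exact hnA2)
      rw [hcard] at this
      rw [← this, hP]
      congr 1
      ext A
      simp [Finset.insert_subset_iff]
    · rw [if_neg hnA2]
      rw [Finset.card_eq_zero, Finset.filter_eq_empty_iff]
      intro A hA hmem
      rw [hP, Finset.mem_powersetCard] at hA
      have hsub : ({i, j} : Finset (Fin n)) ⊆ A := by
        simp [Finset.insert_subset_iff, hmem.1, hmem.2]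
      have := Finset.card_le_card hsub
      rw [Finset.card_pair hij, hA.2] at this
      omega
  -- swap sums
  have swap : ∀ F : Fin n → Fin n → ℝ,
      ∑ A ∈ P, ∑ i ∈ A, ∑ j ∈ A, F i j
        = ∑ i, ∑ j, ((P.filter (fun A => i ∈ A ∧ j ∈ A)).card : ℝ) * F i j := by
    intro F
    have e1 : ∀ (A : Finset (Fin n)) (X : Fin n → ℝ),
        ∑ i ∈ A, X i = ∑ i, if i ∈ A then X i else 0 := by
      intro A X
      rw [Finset.sum_ite_mem, Finset.univ_inter]
    calc ∑ A ∈ P, ∑ i ∈ A, ∑ j ∈ A, F i j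
        = ∑ A ∈ P, ∑ i, ∑ j, if i ∈ A ∧ j ∈ A then F i j else 0 := by
          refine Finset.sum_congr rfl fun A _ => ?_
          rw [e1 A]
          refine Finset.sum_congr rfl fun i _ => ?_
          by_cases hiA : i ∈ A
          · simp only [hiA, if_true, true_and]
            rw [e1 A]
          · simp [hiA]
      _ = ∑ i, ∑ j, ∑ A ∈ P, if i ∈ A ∧ j ∈ A then F i j else 0 := by
          rw [Finset.sum_comm]
          exact Finset.sum_congr rfl fun i _ => Finset.sum_comm
      _ = ∑ i, ∑ j, ((P.filter (fun A => i ∈ A ∧ j ∈ A)).card : ℝ) * F i j := by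
          refine Finset.sum_congr rfl fun i _ => Finset.sum_congr rfl fun j _ => ?_
          rw [Finset.sum_ite, Finset.sum_const, Finset.sum_const_zero, add_zero,
            nsmul_eq_mul]
  set F : Fin n → Fin n → ℝ := fun i j => a j * g i j with hF
  -- column sums of F vanish
  have hT : ∑ i, ∑ j, F i j = 0 := by
    rw [Finset.sum_comm]
    have hcol : ∀ j, ∑ i, F i j = 0 := by
      intro j
      have hzg : ∑ i, g i j = 0 := by
        simp only [hg]
        rw [← sum_dotProduct', hz, zero_dotProduct]
      simp only [hF]
      rw [← Finset.mul_sum, hzg, mul_zero]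
    simp [hcol]
  have main : ∑ A ∈ P, ∑ i ∈ A, ∑ j ∈ A, F i j
      = (((n-1).choose (nA-1) : ℕ) : ℝ) * (∑ i, F i i) - (c2n : ℝ) * (∑ i, F i i) := by
    rw [swap F]
    have perI : ∀ i : Fin n, ∑ j, ((P.filter (fun A => i ∈ A ∧ j ∈ A)).card : ℝ) * F i j
        = (((n-1).choose (nA-1) : ℕ) : ℝ) * F i i + (c2n:ℝ) * ((∑ j, F i j) - F i i) := by
      intro i
      rw [← Finset.add_sum_erase _ _ (Finset.mem_univ i)]
      congr 1
      · rw [count1 i]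
      · calc ∑ j ∈ Finset.univ.erase i, ((P.filter (fun A => i ∈ A ∧ j ∈ A)).card : ℝ) * F i j
            = ∑ j ∈ Finset.univ.erase i, (c2n:ℝ) * F i j :=
              Finset.sum_congr rfl fun j hj => by
                rw [count2 i j (Ne.symm (Finset.ne_of_mem_erase hj))]
          _ = (c2n:ℝ) * ((∑ j, F i j) - F i i) := by
              rw [← Finset.mul_sum, Finset.sum_erase_eq_sub (Finset.mem_univ i)]
    rw [Finset.sum_congr rfl (fun i _ => perI i)]
    rw [Finset.sum_add_distrib, ← Finset.mul_sum, ← Finset.mul_sum, Finset.sum_sub_distrib,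
      hT, zero_sub, mul_neg]
    ring
  -- rewrite the numerator
  have key' : ∀ A ∈ P,
      ((((n - nA : ℕ) : ℝ)⁻¹ • ∑ i ∈ Aᶜ, z i) ⬝ᵥ
          (D⁻¹ *ᵥ (((nA : ℝ) / (n : ℝ)) • ((nA : ℝ)⁻¹ • ∑ i ∈ A, a i • z i))))
        = -(c * ∑ i ∈ A, ∑ j ∈ A, F i j) := by
    intro A hA
    rw [key A hA]
  rw [Finset.sum_congr rfl key']
  have hnum : ∑ A ∈ P, -(c * ∑ i ∈ A, ∑ j ∈ A, F i j)
      = -(c * ((((n-1).choose (nA-1) : ℕ) : ℝ) - (c2n : ℝ)) * (∑ i, F i i)) := by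
    rw [Finset.sum_neg_distrib, ← Finset.mul_sum, main]
    ring
  rw [hnum]
  -- identify the diagonal sum
  have hSh : ∑ i, h i * a i = ∑ i, F i i := by
    refine Finset.sum_congr rfl fun i _ => ?_
    simp only [hF, hg]
    rw [hh i, mul_comm]
  rw [hSh]
  -- cardinality
  have hcard : (P.card : ℝ) = (n.choose nA : ℝ) := by
    rw [hP, Finset.card_powersetCard, Finset.card_univ, Fintype.card_fin]
  rw [hcard]
  -- arithmetic with binomial identities
  have hn1le : 1 ≤ n := le_trans h1 h2.le
  have hnR : (n:ℝ) ≠ 0 := Nat.cast_ne_zero.mpr (by omega)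
  have hnAR : (nA:ℝ) ≠ 0 := Nat.cast_ne_zero.mpr (by omega)
  have hn1 : (n:ℝ) - 1 ≠ 0 := by
    have : (1:ℝ) < (n:ℝ) := by exact_mod_cast (by omega : 1 < n)
    linarith
  have hnnA : ((n - nA : ℕ) : ℝ) = (n:ℝ) - (nA:ℝ) := by
    push_cast [h2.le]; ring
  have hnnA0 : (n:ℝ) - (nA:ℝ) ≠ 0 := by
    have : (nA:ℝ) < (n:ℝ) := by exact_mod_cast h2
    linarith
  have hC0 : ((n.choose nA : ℕ) : ℝ) ≠ 0 :=
    Nat.cast_ne_zero.mpr (Nat.choose_pos h2.le).ne'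
  have e1n : n * (n - 1).choose (nA - 1) = n.choose nA * nA := by
    have := Nat.add_one_mul_choose_eq (n-1) (nA-1)
    simpa [Nat.succ_eq_add_one, Nat.sub_add_cancel hn1le, Nat.sub_add_cancel h1] using this
  have ec1 : (((n-1).choose (nA-1) : ℕ) : ℝ) = (nA:ℝ) * ((n.choose nA : ℕ) : ℝ) / (n:ℝ) := by
    rw [eq_div_iff hnR]
    have : (n:ℝ) * (((n-1).choose (nA-1) : ℕ) : ℝ) = ((n.choose nA : ℕ):ℝ) * (nA:ℝ) := by
      exact_mod_cast e1n
    linarith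
  have ec2 : (c2n : ℝ) = ((nA:ℝ) - 1) * (((n-1).choose (nA-1) : ℕ) : ℝ) / ((n:ℝ)-1) := by
    rw [eq_div_iff hn1]
    by_cases hnA2 : 2 ≤ nA
    · rw [hc2n, if_pos hnA2]
      have e2n : (n-1) * (n - 2).choose (nA - 2) = (n-1).choose (nA-1) * (nA-1) := by
        have := Nat.add_one_mul_choose_eq (n-2) (nA-2)
        simpa [Nat.succ_eq_add_one, show n-2+1 = n-1 by omega, show nA-2+1 = nA-1 by omega]
          using this
      have h1' : ((n-1:ℕ):ℝ) = (n:ℝ) - 1 := by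
        push_cast [hn1le]; ring
      have h2' : ((nA-1:ℕ):ℝ) = (nA:ℝ) - 1 := by
        push_cast [h1]; ring
      have : ((n-1:ℕ):ℝ) * (((n-2).choose (nA-2):ℕ):ℝ)
          = (((n-1).choose (nA-1):ℕ):ℝ) * ((nA-1:ℕ):ℝ) := by exact_mod_cast e2n
      rw [h1', h2'] at this
      linarith
    · have hnA1 : nA = 1 := by omega
      rw [hc2n, if_neg hnA2]
      simp [hnA1]
  rw [ec2, ec1, hc, hnnA]
  field_simp
  ring
end

section
/- Decomposition of the OLS covariate coefficient: with D̂ = (1/n)∑ z_i z_i' − p_A z̄_A z̄_A' − p_B z̄_B z̄_B', N̂ = p_A( (1/n_A)∑_{i∈A} a_i z_i − ā_A z̄_A ) + p_B( (1/n_B)∑_{i∈B} b_i z_i − b̄_B z̄_B ), D = (1/n)∑ z_i z_i', N = p_A (1/n)∑ a_i z_i + p_B (1/n)∑ b_i z_i, Q = D^{-1}N, and centered outcomes a*_i = a_i − ā, b*_i = b_i − b̄, one has the exact identity (assuming D and D̂ invertible, ∑ z_i = 0): D̂^{-1}N̂ = Q + D^{-1}( p_A( (1/n_A)∑_{i∈A}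 a*_i z_i − (1/n)∑_i a*_i z_i ) + p_B( (1/n_B)∑_{i∈B} b*_i z_i − (1/n)∑_i b*_i z_i ) ) − D^{-1}( p_A ā*_A z̄_A + p_B b̄*_B z̄_B ) + (D̂^{-1} − D^{-1})N̂, where ā*_A = ā_A − ā, b̄*_B = b̄_B − b̄. -/
open Finset Matrix

/-!
Write `D̂⁻¹ N̂ = D⁻¹ N + D⁻¹ (N̂ - N) + (D̂⁻¹ - D⁻¹) N̂`; it remains to identify `N̂ - N`.
Since `∑ zᵢ = 0`, centering an outcome at `c` leaves the population sum `∑ aᵢ zᵢ` unchanged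
and shifts the group sum `(1/n_A) ∑_{i∈A} aᵢ zᵢ` by `c z̄_A`, so the centered terms minus
`p_A (ā_A - c) z̄_A + p_B (b̄_B - c') z̄_B` are exactly `N̂ - N`.
-/

theorem Matrix.mulVec_eq_mulVec_add_mulVec_sub_add_sub_mulVec {m n R : Type*} [Fintype n]
    [Ring R] (M M' : Matrix m n R) (v w : n → R) :
    M' *ᵥ v = M *ᵥ w + M *ᵥ (v - w) + (M' - M) *ᵥ v := by
  rw [mulVec_sub, sub_mulVec]
  abel

theorem Finset.sum_sub_const_smul {ι R E : Type*} [Ring R] [AddCommGroup E] [Module R E]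
    (s : Finset ι) (a : ι → R) (c : R) (z : ι → E) :
    ∑ i ∈ s, (a i - c) • z i = ∑ i ∈ s, a i • z i - c • ∑ i ∈ s, z i := by
  simp only [sub_smul, sum_sub_distrib, smul_sum]

theorem stmt18_general (n K : ℕ) (z : Fin n → Fin K → ℝ) (hzsum : ∑ i, z i = 0)
    (a b : Fin n → ℝ)
    (A : Finset (Fin n))
    (nA nB : ℕ)
    (pA pB : ℝ)
    (abar bbar : ℝ)
    (zA zB : Fin K → ℝ)
    (hzA : zA = (nA : ℝ)⁻¹ • ∑ i ∈ A, z i)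
    (hzB : zB = (nB : ℝ)⁻¹ • ∑ i ∈ Aᶜ, z i)
    (aA bB : ℝ)
    (D Dhat : Matrix (Fin K) (Fin K) ℝ)
    (N Nhat : Fin K → ℝ)
    (hN : N = pA • ((n : ℝ)⁻¹ • ∑ i, a i • z i) + pB • ((n : ℝ)⁻¹ • ∑ i, b i • z i))
    (hNhat : Nhat = pA • ((nA : ℝ)⁻¹ • ∑ i ∈ A, a i • z i - aA • zA)
                    + pB • ((nB : ℝ)⁻¹ • ∑ i ∈ Aᶜ, b i • z i - bB • zB))
    (Q : Fin K → ℝ) (hQ : Q = D⁻¹ *ᵥ N) :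
    Dhat⁻¹ *ᵥ Nhat
      = Q
        + D⁻¹ *ᵥ (pA • ((nA : ℝ)⁻¹ • ∑ i ∈ A, (a i - abar) • z i
                          - (n : ℝ)⁻¹ • ∑ i, (a i - abar) • z i)
                  + pB • ((nB : ℝ)⁻¹ • ∑ i ∈ Aᶜ, (b i - bbar) • z i
                          - (n : ℝ)⁻¹ • ∑ i, (b i - bbar) • z i))
        - D⁻¹ *ᵥ (pA • ((aA - abar) • zA) + pB • ((bB - bbar) • zB))
        + (Dhat⁻¹ - D⁻¹) *ᵥ Nhat := by
  have hcentered :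
      pA • ((nA : ℝ)⁻¹ • ∑ i ∈ A, (a i - abar) • z i - (n : ℝ)⁻¹ • ∑ i, (a i - abar) • z i)
        + pB • ((nB : ℝ)⁻¹ • ∑ i ∈ Aᶜ, (b i - bbar) • z i
          - (n : ℝ)⁻¹ • ∑ i, (b i - bbar) • z i)
        - (pA • ((aA - abar) • zA) + pB • ((bB - bbar) • zB)) = Nhat - N := by
    simp only [sum_sub_const_smul, hzsum, smul_zero, sub_zero, hzA, hzB, hN, hNhat]
    module
  rw [hQ, add_sub_assoc, ← mulVec_sub, hcentered]
  exact mulVec_eq_mulVec_add_mulVec_sub_add_sub_mulVec _ _ _ _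

/-- Exact decomposition of the OLS covariate coefficient (Theorem 3.1):
`D̂⁻¹ N̂ = Q + ν₁ + ν₃ + ν₂`. -/
theorem stmt18 (n K : ℕ) (z : Fin n → Fin K → ℝ) (hzsum : ∑ i, z i = 0)
    (a b : Fin n → ℝ)
    (A : Finset (Fin n)) (hA1 : 1 ≤ A.card) (hA2 : A.card < n)
    (nA nB : ℕ) (hnA : nA = A.card) (hnB : nB = n - nA)
    (pA pB : ℝ) (hpA : pA = (nA : ℝ) / (n : ℝ)) (hpB : pB = (nB : ℝ) / (n : ℝ))
    (abar bbar : ℝ)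
    (habar : abar = (n : ℝ)⁻¹ * ∑ i, a i) (hbbar : bbar = (n : ℝ)⁻¹ * ∑ i, b i)
    (zA zB : Fin K → ℝ)
    (hzA : zA = (nA : ℝ)⁻¹ • ∑ i ∈ A, z i)
    (hzB : zB = (nB : ℝ)⁻¹ • ∑ i ∈ Aᶜ, z i)
    (aA bB : ℝ)
    (haA : aA = (nA : ℝ)⁻¹ * ∑ i ∈ A, a i)
    (hbB : bB = (nB : ℝ)⁻¹ * ∑ i ∈ Aᶜ, b i)
    (D Dhat : Matrix (Fin K) (Fin K) ℝ)
    (hD : D = (n : ℝ)⁻¹ • ∑ i, vecMulVec (z i) (z i))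
    (hDhat : Dhat = D - pA • vecMulVec zA zA - pB • vecMulVec zB zB)
    (hDinv : IsUnit D.det) (hDhatinv : IsUnit Dhat.det)
    (N Nhat : Fin K → ℝ)
    (hN : N = pA • ((n : ℝ)⁻¹ • ∑ i, a i • z i) + pB • ((n : ℝ)⁻¹ • ∑ i, b i • z i))
    (hNhat : Nhat = pA • ((nA : ℝ)⁻¹ • ∑ i ∈ A, a i • z i - aA • zA)
                    + pB • ((nB : ℝ)⁻¹ • ∑ i ∈ Aᶜ, b i • z i - bB • zB))
    (Q : Fin K → ℝ) (hQ : Q = D⁻¹ *ᵥ N) :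
    Dhat⁻¹ *ᵥ Nhat
      = Q
        + D⁻¹ *ᵥ (pA • ((nA : ℝ)⁻¹ • ∑ i ∈ A, (a i - abar) • z i
                          - (n : ℝ)⁻¹ • ∑ i, (a i - abar) • z i)
                  + pB • ((nB : ℝ)⁻¹ • ∑ i ∈ Aᶜ, (b i - bbar) • z i
                          - (n : ℝ)⁻¹ • ∑ i, (b i - bbar) • z i))
        - D⁻¹ *ᵥ (pA • ((aA - abar) • zA) + pB • ((bB - bbar) • zB))
        + (Dhat⁻¹ - D⁻¹) *ᵥ Nhat :=
  stmt18_general n K z hzsum a b A nA nB pA pB abar bbar zA zB hzA hzB aA bB D Dhat N Nhat hN hNhat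
    Q hQ
end

section
/- Under complete randomization with zero-mean covariates z_i ∈ ℝ^K and D = (1/n)∑ z_i z_i' invertible, E[ z̄_A' D^{-1} ā*_A z̄_A ] = N_AAA · (1/n) ∑_{i=1}^n h_i a*_i, where h_i = z_i' D^{-1} z_i, a*_i = a_i − ā, ā*_A = (1/n_A)∑_{i∈A} a*_i, and N_AAA = (n/n_A³)( n_A/n − 3n_A(n_A−1)/(n(n−1)) + 2n_A(n_A−1)(n_A−2)/(n(n−1)(n−2)) ). -/
/-!
Expanding the three sample means, `∑_A z̄_A' D⁻¹ z̄_A ā*_A` becomes a sum over triples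
`(i, j, k)` of `(z_i' D⁻¹ z_j) a*_k`, weighted by the number of samples containing `{i, j, k}`.
That number only depends on `#{i, j, k}`; for a size-`s` set it is `C(n, n_A) (n_A)_s / (n)_s`
in falling factorials. Writing the weight as a combination of the coincidence indicators
`[i = j]`, `[j = k]`, `[i = k]`, `[i = j = k]`, every term but the diagonal one is a sum along a
free index of an array whose marginals vanish, because `∑ z_i = 0` and `∑ a*_i = 0`. Only the
diagonal `∑ h_i a*_i` survives, with coefficient `p₁ - 3 p₂ + 2 p₃`, `p_s = (n_A)_s / (n)_s`.
-/

open Finset Matrix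

theorem Nat.choose_sub_mul_descFactorial {n m s : ℕ} (hsm : s ≤ m) :
    (n - s).choose (m - s) * n.descFactorial s = n.choose m * m.descFactorial s := by
  rw [Nat.descFactorial_eq_factorial_mul_choose, Nat.descFactorial_eq_factorial_mul_choose,
    mul_left_comm (n.choose m), Nat.choose_mul hsm]
  ring

theorem Nat.cast_descFactorial_three_s19 {S : Type*} [CommRing S] (m : ℕ) :
    (m.descFactorial 3 : S) = m * (m - 1) * (m - 2) := by
  rw [← descPochhammer_eval_eq_descFactorial S]
  simp [descPochhammer_succ_right]

section TripleSums

variable {α R : Type*} [DecidableEq α]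

theorem card_filter_powersetCard_univ_subset_mul_descFactorial [Fintype α] (m : ℕ)
    (S : Finset α) :
    #{A ∈ powersetCard m univ | S ⊆ A} * (Fintype.card α).descFactorial #S
      = (Fintype.card α).choose m * m.descFactorial #S := by
  by_cases hSm : #S ≤ m
  · rw [card_filter_powersetCard_subset S (univ : Finset α) m (subset_univ S) hSm, card_univ,
      Nat.choose_sub_mul_descFactorial hSm]
  · have hempty : {A ∈ powersetCard m (univ : Finset α) | S ⊆ A} = ∅ :=
      filter_eq_empty_iff.mpr fun A hA hSA =>
        hSm ((card_le_card hSA).trans_eq (mem_powersetCard.mp hA).2)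
    rw [hempty, Nat.descFactorial_eq_zero_iff_lt.mpr (not_le.mp hSm)]
    simp

theorem sum_powersetCard_sum_sum_sum_eq_sum_card_mul [Fintype α] [NonAssocSemiring R] (m : ℕ)
    (f : α → α → α → R) :
    ∑ A ∈ powersetCard m univ, ∑ i ∈ A, ∑ j ∈ A, ∑ k ∈ A, f i j k
      = ∑ i, ∑ j, ∑ k, (#{A ∈ powersetCard m univ | {i, j, k} ⊆ A} : R) * f i j k := by
  have hA : ∀ A : Finset α, ∑ i ∈ A, ∑ j ∈ A, ∑ k ∈ A, f i j k
      = ∑ i, ∑ j, ∑ k, if {i, j, k} ⊆ A then f i j k else 0 := fun A => by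
    simp [insert_subset_iff, ite_and]
  simp only [hA, natCast_card_filter, sum_mul, ite_mul, one_mul, zero_mul]
  rw [sum_comm]
  refine sum_congr rfl fun i _ => ?_
  rw [sum_comm]
  exact sum_congr rfl fun j _ => sum_comm

theorem apply_card_triple_eq [CommRing R] (N : ℕ → R) (i j k : α) :
    N #{i, j, k} = N 3 + (N 2 - N 3) * ((if i = j then 1 else 0) + (if j = k then 1 else 0)
      + (if i = k then 1 else 0))
      + (N 1 - 3 * N 2 + 2 * N 3) * (if i = j ∧ j = k then 1 else 0) := by
  by_cases hij : i = j <;> by_cases hjk : j = k <;> by_cases hik : i = k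
  all_goals simp_all [card_insert_of_notMem]
  all_goals ring

theorem sum_sum_sum_apply_card_triple_mul [Fintype α] [CommRing R] (N : ℕ → R)
    (f : α → α → α → R)
    (h₁ : ∀ j k, ∑ i, f i j k = 0) (h₂ : ∀ i k, ∑ j, f i j k = 0)
    (h₃ : ∀ i j, ∑ k, f i j k = 0) :
    ∑ i, ∑ j, ∑ k, N #{i, j, k} * f i j k = (N 1 - 3 * N 2 + 2 * N 3) * ∑ i, f i i i := by
  have hall : ∑ i, ∑ j, ∑ k, f i j k = 0 := by simp [h₃]
  have hij : ∑ i, ∑ j, ∑ k, (if i = j then 1 else 0) * f i j k = 0 := by simp [ite_mul, h₃]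
  have hjk : ∑ i, ∑ j, ∑ k, (if j = k then 1 else 0) * f i j k = 0 := by
    simp only [ite_mul, one_mul, zero_mul, sum_ite_eq, mem_univ, if_true]
    rw [sum_comm]
    simp [h₁]
  have hik : ∑ i, ∑ j, ∑ k, (if i = k then 1 else 0) * f i j k = 0 := by simp [ite_mul, h₂]
  have hdiag : ∑ i, ∑ j, ∑ k, (if i = j ∧ j = k then 1 else 0) * f i j k = ∑ i, f i i i := by
    simp [ite_mul, ite_and]
  calc ∑ i, ∑ j, ∑ k, N #{i, j, k} * f i j k
      = ∑ i, ∑ j, ∑ k, (N 3 * f i j k + (N 2 - N 3) * ((if i = j then 1 else 0) * f i j k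
          + (if j = k then 1 else 0) * f i j k + (if i = k then 1 else 0) * f i j k)
          + (N 1 - 3 * N 2 + 2 * N 3) * ((if i = j ∧ j = k then 1 else 0) * f i j k)) := by
        refine sum_congr rfl fun i _ => sum_congr rfl fun j _ => sum_congr rfl fun k _ => ?_
        rw [apply_card_triple_eq N]
        ring
    _ = N 3 * ∑ i, ∑ j, ∑ k, f i j k
          + (N 2 - N 3) * (∑ i, ∑ j, ∑ k, (if i = j then 1 else 0) * f i j k
          + ∑ i, ∑ j, ∑ k, (if j = k then 1 else 0) * f i j k
          + ∑ i, ∑ j, ∑ k, (if i = k then 1 else 0) * f i j k)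
          + (N 1 - 3 * N 2 + 2 * N 3)
            * ∑ i, ∑ j, ∑ k, (if i = j ∧ j = k then 1 else 0) * f i j k := by
        simp only [mul_add, sum_add_distrib, mul_sum]
    _ = (N 1 - 3 * N 2 + 2 * N 3) * ∑ i, f i i i := by
        rw [hall, hij, hjk, hik, hdiag]
        ring

theorem sum_powersetCard_sum_sum_sum_of_marginals_eq_zero [Fintype α] [Field R] [CharZero R]
    (hα : 3 ≤ Fintype.card α) (m : ℕ) (f : α → α → α → R)
    (h₁ : ∀ j k, ∑ i, f i j k = 0) (h₂ : ∀ i k, ∑ j, f i j k = 0)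
    (h₃ : ∀ i j, ∑ k, f i j k = 0) :
    ∑ A ∈ powersetCard m univ, ∑ i ∈ A, ∑ j ∈ A, ∑ k ∈ A, f i j k
      = (Fintype.card α).choose m
          * ((m.descFactorial 1 : R) / (Fintype.card α).descFactorial 1
            - 3 * ((m.descFactorial 2 : R) / (Fintype.card α).descFactorial 2)
            + 2 * ((m.descFactorial 3 : R) / (Fintype.card α).descFactorial 3))
          * ∑ i, f i i i := by
  set N : ℕ → R := fun s =>
    (Fintype.card α).choose m * (m.descFactorial s : R) / (Fintype.card α).descFactorial s
  have hcount : ∀ i j k : α,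
      (#{A ∈ powersetCard m univ | {i, j, k} ⊆ A} : R) = N #{i, j, k} := fun i j k => by
    have hpos : ((Fintype.card α).descFactorial #{i, j, k} : R) ≠ 0 := by
      have : #{i, j, k} ≤ Fintype.card α := (card_le_three).trans hα
      exact_mod_cast Nat.descFactorial_eq_zero_iff_lt.not.mpr (not_lt.mpr this)
    rw [eq_div_iff hpos]
    exact_mod_cast card_filter_powersetCard_univ_subset_mul_descFactorial m {i, j, k}
  rw [sum_powersetCard_sum_sum_sum_eq_sum_card_mul]
  simp only [hcount]
  rw [sum_sum_sum_apply_card_triple_mul N f h₁ h₂ h₃]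
  simp only [N]
  ring

end TripleSums

theorem sum_dotProduct_mulVec_sum {ι K R : Type*} [Fintype K] [CommSemiring R]
    (M : Matrix K K R) (z : ι → K → R) (s : Finset ι) :
    (∑ i ∈ s, z i) ⬝ᵥ (M *ᵥ ∑ j ∈ s, z j) = ∑ i ∈ s, ∑ j ∈ s, z i ⬝ᵥ (M *ᵥ z j) := by
  simp only [mulVec_sum, dotProduct_sum, sum_dotProduct]
  exact sum_comm

theorem stmt19_general (n K nA : ℕ) (hn : 3 ≤ n) (h2 : nA ≤ n)
    (z : Fin n → Fin K → ℝ) (hz : ∑ i, z i = 0)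
    (a : Fin n → ℝ)
    (D : Matrix (Fin K) (Fin K) ℝ)
    (h : Fin n → ℝ) (hh : ∀ i, h i = z i ⬝ᵥ (D⁻¹ *ᵥ z i))
    (abar : ℝ) (habar : abar = (n : ℝ)⁻¹ * ∑ i, a i) :
    (∑ A ∈ Finset.powersetCard nA (Finset.univ : Finset (Fin n)),
        ((nA : ℝ)⁻¹ • ∑ i ∈ A, z i) ⬝ᵥ
          (D⁻¹ *ᵥ (((nA : ℝ)⁻¹ * ∑ i ∈ A, (a i - abar)) •
                    ((nA : ℝ)⁻¹ • ∑ i ∈ A, z i)))) /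
      ((Finset.powersetCard nA (Finset.univ : Finset (Fin n))).card : ℝ)
    = ((n : ℝ) / (nA : ℝ) ^ 3) *
        ((nA : ℝ) / n - 3 * nA * ((nA : ℝ) - 1) / ((n : ℝ) * ((n : ℝ) - 1))
          + 2 * nA * ((nA : ℝ) - 1) * ((nA : ℝ) - 2) /
              ((n : ℝ) * ((n : ℝ) - 1) * ((n : ℝ) - 2))) *
        ((n : ℝ)⁻¹ * ∑ i, h i * (a i - abar)) := by
  have hn0 : (n : ℝ) ≠ 0 := by positivity
  have hw : ∑ i, (a i - abar) = 0 := by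
    rw [sum_sub_distrib, sum_const, card_univ, Fintype.card_fin, nsmul_eq_mul, habar,
      mul_inv_cancel_left₀ hn0, sub_self]
  have hterm : ∀ A : Finset (Fin n),
      ((nA : ℝ)⁻¹ • ∑ i ∈ A, z i) ⬝ᵥ
          (D⁻¹ *ᵥ (((nA : ℝ)⁻¹ * ∑ i ∈ A, (a i - abar)) • ((nA : ℝ)⁻¹ • ∑ i ∈ A, z i)))
        = (nA : ℝ)⁻¹ ^ 3 *
          ∑ i ∈ A, ∑ j ∈ A, ∑ k ∈ A, z i ⬝ᵥ (D⁻¹ *ᵥ z j) * (a k - abar) := fun A => by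
    rw [mulVec_smul, mulVec_smul, dotProduct_smul, dotProduct_smul, smul_dotProduct,
      sum_dotProduct_mulVec_sum]
    simp only [smul_eq_mul, ← mul_sum, ← sum_mul]
    ring
  have hC : ((n.choose nA : ℕ) : ℝ) ≠ 0 := by
    have := Nat.choose_pos h2
    positivity
  have hsum_left : ∀ j k, ∑ i, z i ⬝ᵥ (D⁻¹ *ᵥ z j) * (a k - abar) = 0 := fun j k => by
    rw [← sum_mul, ← sum_dotProduct, hz, zero_dotProduct, zero_mul]
  have hsum_mid : ∀ i k, ∑ j, z i ⬝ᵥ (D⁻¹ *ᵥ z j) * (a k - abar) = 0 := fun i k => by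
    rw [← sum_mul, ← dotProduct_sum, ← mulVec_sum, hz, mulVec_zero, dotProduct_zero, zero_mul]
  have hsum_right : ∀ i j, ∑ k, z i ⬝ᵥ (D⁻¹ *ᵥ z j) * (a k - abar) = 0 := fun i j => by
    rw [← mul_sum, hw, mul_zero]
  rw [sum_congr rfl fun A _ => hterm A, ← mul_sum,
    sum_powersetCard_sum_sum_sum_of_marginals_eq_zero (by simpa using hn) nA _
      hsum_left hsum_mid hsum_right,
    card_powersetCard, card_univ, Fintype.card_fin]
  simp only [Nat.descFactorial_one, Nat.cast_descFactorial_two, Nat.cast_descFactorial_three_s19, hh]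
  field_simp

/-- `E[ z̄_A' D⁻¹ ā*_A z̄_A ] = N_AAA (1/n) ∑ h_i a*_i` with `h_i = z_i' D⁻¹ z_i`. -/
theorem stmt19 (n K nA : ℕ) (hn : 3 ≤ n) (h1 : 1 ≤ nA) (h2 : nA ≤ n)
    (z : Fin n → Fin K → ℝ) (hz : ∑ i, z i = 0)
    (a : Fin n → ℝ)
    (D : Matrix (Fin K) (Fin K) ℝ)
    (hD : D = (n : ℝ)⁻¹ • ∑ i, vecMulVec (z i) (z i))
    (hDinv : IsUnit D.det)
    (h : Fin n → ℝ) (hh : ∀ i, h i = z i ⬝ᵥ (D⁻¹ *ᵥ z i))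
    (abar : ℝ) (habar : abar = (n : ℝ)⁻¹ * ∑ i, a i) :
    (∑ A ∈ Finset.powersetCard nA (Finset.univ : Finset (Fin n)),
        ((nA : ℝ)⁻¹ • ∑ i ∈ A, z i) ⬝ᵥ
          (D⁻¹ *ᵥ (((nA : ℝ)⁻¹ * ∑ i ∈ A, (a i - abar)) •
                    ((nA : ℝ)⁻¹ • ∑ i ∈ A, z i)))) /
      ((Finset.powersetCard nA (Finset.univ : Finset (Fin n))).card : ℝ)
    = ((n : ℝ) / (nA : ℝ) ^ 3) *
        ((nA : ℝ) / n - 3 * nA * ((nA : ℝ) - 1) / ((n : ℝ) * ((n : ℝ) - 1))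
          + 2 * nA * ((nA : ℝ) - 1) * ((nA : ℝ) - 2) /
              ((n : ℝ) * ((n : ℝ) - 1) * ((n : ℝ) - 2))) *
        ((n : ℝ)⁻¹ * ∑ i, h i * (a i - abar)) :=
  stmt19_general n K nA hn h2 z hz a D h hh abar habar
end
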